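/- (Theorem 9) The combined operator P_link U^y_π commutes with the link-centered twist operators: (P_link U^y_π) U^twl_{±2π} = U^twl_{±2π} (P_link U^y_π). -/

import Mathlib

open scoped BigOperators Matrix
open Fin.NatCast
noncomputable section

namespace LSM

/-- Number of basis states per site: `2S+1`. -/
abbrev N (twoS : ℕ) : ℕ := twoS + 1

/-- The spin value `S` as a real number (so `2S = twoS`). -/
def spin (twoS : ℕ) : ℝ := (twoS : ℝ) / 2

/-- The `S^z`-value of the `k`-th basis vector: `m = S - k`, `k = 0, …, 2S`. -/
def mval (twoS : ℕ) (k : Fin (N twoS)) : ℝ := spin twoS - (k : ℕ)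

/-- Single-site `S^z` matrix. -/
def SzMat (twoS : ℕ) : Matrix (Fin (N twoS)) (Fin (N twoS)) ℂ :=
  Matrix.diagonal fun k => (mval twoS k : ℂ)

/-- Single-site raising operator `S^+`. -/
def SpMat (twoS : ℕ) : Matrix (Fin (N twoS)) (Fin (N twoS)) ℂ :=
  Matrix.of fun a b =>
    if (a : ℕ) + 1 = (b : ℕ) then
      ((Real.sqrt (spin twoS * (spin twoS + 1) - mval twoS b * (mval twoS b + 1)) : ℝ) : ℂ)
    else 0

/-- Single-site lowering operator `S^-`. -/
def SmMat (twoS : ℕ) : Matrix (Fin (N twoS)) (Fin (N twoS)) ℂ :=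
  Matrix.of fun a b =>
    if (a : ℕ) = (b : ℕ) + 1 then
      ((Real.sqrt (spin twoS * (spin twoS + 1) - mval twoS b * (mval twoS b - 1)) : ℝ) : ℂ)
    else 0

/-- Single-site `S^y = (S^+ - S^-)/(2i)`. -/
def SyMat (twoS : ℕ) : Matrix (Fin (N twoS)) (Fin (N twoS)) ℂ :=
  ((2 : ℂ) * Complex.I)⁻¹ • (SpMat twoS - SmMat twoS)

/-- Single-site `S^x = (S^+ + S^-)/2`. -/
def SxMat (twoS : ℕ) : Matrix (Fin (N twoS)) (Fin (N twoS)) ℂ :=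
  ((2 : ℂ))⁻¹ • (SpMat twoS + SmMat twoS)

/-- Configurations (product basis labels) of the chain of length `L`. -/
abbrev Conf (twoS L : ℕ) := Fin L → Fin (N twoS)

/-- Operators on the chain Hilbert space `⊗_{j=1}^L ℂ^{2S+1}`, as matrices in the
product basis. -/
abbrev Op (twoS L : ℕ) := Matrix (Conf twoS L) (Conf twoS L) ℂ

/-- The single-site matrix `A` acting on the `j`-th tensor factor (identity elsewhere). -/
def site (twoS L : ℕ) (j : Fin L) (A : Matrix (Fin (N twoS)) (Fin (N twoS)) ℂ) :
    Op twoS L :=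
  Matrix.of fun x y => if ∀ i, i ≠ j → x i = y i then A (x j) (y j) else 0

/-- Total `S^z`. -/
def SzT (twoS L : ℕ) : Op twoS L := ∑ j : Fin L, site twoS L j (SzMat twoS)

/-- Total `S^y`. -/
def SyT (twoS L : ℕ) : Op twoS L := ∑ j : Fin L, site twoS L j (SyMat twoS)

/-- Translation by one site: the permutation matrix with
`Utrl† A_j Utrl = A_{j+1}` for every single-site operator `A`. -/
def Utrl (twoS L : ℕ) [NeZero L] : Op twoS L :=
  Matrix.of fun x y => if x = (fun i => y (i + 1)) then 1 else 0

/-- Site parity (space inversion `j ↦ L - j = -j (mod L)`): the permutation matrix with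
`P† A_j P = A_{L-j}` for every single-site operator `A`. -/
def Pop (twoS L : ℕ) [NeZero L] : Op twoS L :=
  Matrix.of fun x y => if x = (fun i => y (-i)) then 1 else 0

/-- Link parity `P_link = P U_trl`. -/
def Plink (twoS L : ℕ) [NeZero L] : Op twoS L := Pop twoS L * Utrl twoS L

/-- The generalized XXZ Hamiltonian with periodic boundary conditions. -/
def Ham (twoS L : ℕ) [NeZero L] (J Δ : ℕ → ℝ) (h : ℝ) : Op twoS L :=
  (∑ j : Fin L, ∑ r ∈ Finset.Icc 1 (L / 2),
      ((((J r : ℝ) : ℂ) / 2) •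
        (site twoS L j (SpMat twoS) * site twoS L (j + (r : Fin L)) (SmMat twoS) +
          site twoS L j (SmMat twoS) * site twoS L (j + (r : Fin L)) (SpMat twoS)) +
      ((Δ r : ℝ) : ℂ) •
        (site twoS L j (SzMat twoS) * site twoS L (j + (r : Fin L)) (SzMat twoS)))) +
    (h : ℂ) • SzT twoS L

/-- The generator `Σ_{j=1}^{L} j (S^z_j - S)` of the (site-centered) twist. -/
def twistGen (twoS L : ℕ) [NeZero L] : Op twoS L :=
  ∑ j ∈ Finset.Icc 1 L,
    (j : ℂ) • site twoS L ((j : ℕ) : Fin L) (SzMat twoS - ((spin twoS : ℝ) : ℂ) • 1)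

/-- The twist operator `U^tw_{ε·2π} = exp(-ε (2πi/L) Σ_j j (S^z_j - S))`, `ε = ±1`. -/
def Utw (twoS L : ℕ) [NeZero L] (ε : ℝ) : Op twoS L :=
  NormedSpace.exp ((-(ε : ℂ) * ((2 * Real.pi / L : ℝ) : ℂ) * Complex.I) • twistGen twoS L)

/-- The generator `Σ_{j=1}^{L} (j - 1/2)(S^z_j - S)` of the link-centered twist. -/
def twistGenL (twoS L : ℕ) [NeZero L] : Op twoS L :=
  ∑ j ∈ Finset.Icc 1 L,
    ((j : ℂ) - 1 / 2) • site twoS L ((j : ℕ) : Fin L) (SzMat twoS - ((spin twoS : ℝ) : ℂ) • 1)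

/-- The link-centered twist operator `U^twl_{ε·2π}`, `ε = ±1`. -/
def UtwL (twoS L : ℕ) [NeZero L] (ε : ℝ) : Op twoS L :=
  NormedSpace.exp ((-(ε : ℂ) * ((2 * Real.pi / L : ℝ) : ℂ) * Complex.I) • twistGenL twoS L)

/-- The spin-reversal operator `U^y_π = exp(-iπ S^y_T)`. -/
def Uy (twoS L : ℕ) : Op twoS L :=
  NormedSpace.exp ((-Complex.I * ((Real.pi : ℝ) : ℂ)) • SyT twoS L)

/-- The sector `V(M, q)` of simultaneous eigenvectors of `S^z_T` (eigenvalue `M`) and of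
the translation `U_trl` (eigenvalue `e^{iq}`). -/
def Vsp (twoS L : ℕ) [NeZero L] (M q : ℝ) : Submodule ℂ (Conf twoS L → ℂ) :=
  Module.End.eigenspace (Matrix.mulVecLin (SzT twoS L)) ((M : ℝ) : ℂ) ⊓
    Module.End.eigenspace (Matrix.mulVecLin (Utrl twoS L)) (Complex.exp (Complex.I * q))

/-- `E(M; q)`: the smallest eigenvalue of `H` restricted to the sector `V(M,q)`. -/
def En (twoS L : ℕ) [NeZero L] (J Δ : ℕ → ℝ) (h : ℝ) (M q : ℝ) : ℝ :=
  sInf {E : ℝ | ∃ ψ ∈ Vsp twoS L M q, ψ ≠ 0 ∧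
    (Ham twoS L J Δ h).mulVec ψ = ((E : ℝ) : ℂ) • ψ}

/-- The expectation value `⟨ψ, A ψ⟩`. -/
def expVal (twoS L : ℕ) (A : Op twoS L) (ψ : Conf twoS L → ℂ) : ℂ :=
  dotProduct (star ψ) (A.mulVec ψ)

/-- `q` belongs to the lattice `(2π/L)ℤ` of allowed wavenumbers. -/
def allowedQ (L : ℕ) (q : ℝ) : Prop := ∃ k : ℤ, q = 2 * Real.pi * k / L

/-!
In the product basis the link twist `U^twl_ε = exp(c_ε G)`, `c_ε = -2πiε/L`, is diagonal, where
`G = Σ_j (j - 1/2)(S^z_j - S)`. Each factor of `P_link U^y_π` reverses the twist, `ε ↦ -ε`, so their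
product commutes with it.

For `U^y_π`: the operators `S^z ± i S^x` are eigen-operators of `ad S^y` with eigenvalues `±1`, so
the π-rotation negates both of them, hence also `S^z_j`. Thus `U^y_π G = (-G - S L²) U^y_π`, and
the resulting phase `exp(2πiε S L)` is trivial because `S L` is an integer for even `L`.

For `P_link`, which maps site `j` to `L + 1 - j`: the weights `j - 1/2` and `L + 1/2 - j` of a site
and of its mirror image add up to `L`, so `G` and its reflection add up to `L Σ_j (S^z_j - S)`,
whose eigenvalues lie in `Lℤ`; the phase `exp(c_ε L n)` is again trivial.
-/

end LSM

namespace Fin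

open Fin.CommRing in
lemma natCast_add_one_sub {L : ℕ} [NeZero L] {j : ℕ} (hj : j ≤ L + 1) :
    ((L + 1 - j : ℕ) : Fin L) = 1 - (j : Fin L) := by
  rw [Nat.cast_sub hj, Nat.cast_succ, Fin.natCast_self, zero_add]

end Fin

namespace Finset

variable {L : ℕ} [NeZero L]

lemma sum_Icc_sub_half_mul_reflect (f : Fin L → ℂ) :
    ∑ j ∈ Icc 1 L, ((j : ℂ) - 1 / 2) * f (1 - (j : Fin L)) +
        ∑ j ∈ Icc 1 L, ((j : ℂ) - 1 / 2) * f j =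
      L * ∑ j ∈ Icc 1 L, f j := by
  have hreflect : ∑ j ∈ Icc 1 L, ((j : ℂ) - 1 / 2) * f (1 - (j : Fin L)) =
      ∑ j ∈ Icc 1 L, ((L : ℂ) + 1 / 2 - j) * f j := by
    refine sum_nbij' (fun j => L + 1 - j) (fun j => L + 1 - j) ?_ ?_ ?_ ?_ ?_ <;>
      intro j hj <;> simp only [mem_Icc] at hj ⊢
    iterate 4 omega
    · rw [Fin.natCast_add_one_sub (by omega), Nat.cast_sub (by omega)]
      push_cast
      ring
  rw [hreflect, ← sum_add_distrib, mul_sum]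
  refine sum_congr rfl fun j _ => ?_
  ring

lemma sum_Icc_sub_half : ∑ j ∈ Icc 1 L, ((j : ℂ) - 1 / 2) = L ^ 2 / 2 := by
  have h := sum_Icc_sub_half_mul_reflect (L := L) fun _ => 1
  simp only [mul_one, sum_const, Nat.card_Icc, add_tsub_cancel_right, nsmul_eq_mul] at h
  linear_combination h / 2

end Finset

namespace Matrix

open NormedSpace

variable {n : Type*} [Fintype n] [DecidableEq n]

lemma semiconjBy_exp {X A B : Matrix n n ℂ} (h : SemiconjBy X A B) :
    SemiconjBy X (exp A) (exp B) :=
  open scoped Matrix.Norms.Operator in h.exp_right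

lemma exp_add_smul_one (A : Matrix n n ℂ) (c : ℂ) :
    exp (A + c • 1) = Complex.exp c • exp A := by
  rw [exp_add_of_commute _ _ ((Commute.one_right A).smul_right c), smul_one_eq_diagonal,
    exp_diagonal, Pi.exp_def, ← Complex.exp_eq_exp_ℂ, ← smul_one_eq_diagonal, mul_smul_comm,
    mul_one]

lemma exp_smul_mul_of_commutator_eq {X Y : Matrix n n ℂ} {s : ℂ}
    (h : X * Y - Y * X = s • Y) (t : ℂ) :
    exp (t • X) * Y = Complex.exp (t * s) • (Y * exp (t • X)) := by
  have hsemi : SemiconjBy Y (t • X + (t * s) • 1) (t • X) := by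
    rw [SemiconjBy, mul_add, mul_smul_comm, mul_smul_comm, mul_one, smul_mul_assoc,
      sub_eq_iff_eq_add.mp h]
    module
  rw [← (semiconjBy_exp hsemi).eq, exp_add_smul_one, mul_smul_comm]

lemma of_ite_eq_mul_diagonal {R : Type*} [Semiring R] (f : n → n) {d d' : n → R}
    (h : ∀ y, d y = d' (f y)) :
    (of fun x y => if x = f y then (1 : R) else 0) * diagonal d =
      diagonal d' * of fun x y => if x = f y then (1 : R) else 0 := by
  ext x y
  rw [mul_diagonal, diagonal_mul, of_apply]
  split_ifs with hxy
  · simp [hxy, h]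
  · simp

lemma of_ite_eq_mul_of_ite_eq {R : Type*} [Semiring R] (f g : n → n) :
    ((of fun x y => if x = f y then (1 : R) else 0) * of fun x y => if x = g y then 1 else 0) =
      of fun x y => if x = f (g y) then 1 else 0 := by
  ext x y
  simp [mul_apply]

end Matrix

namespace LSM

section SpinAlgebra

variable {twoS : ℕ}

/-- `S(S+1) - m(m+1)` at `m = S - k`, the square of the matrix element of `S^+` into the basis
state `k`. It vanishes at `k = 0` and at `k = 2S + 1`, so the boundary rows of `S^± S^∓` need no
special treatment. -/
def ladderWeight (twoS k : ℕ) : ℝ := k * (twoS + 1 - k)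

lemma ladderWeight_nonneg {k : ℕ} (hk : k ≤ twoS + 1) : 0 ≤ ladderWeight twoS k := by
  have : (k : ℝ) ≤ twoS + 1 := by exact_mod_cast hk
  unfold ladderWeight; nlinarith

lemma SpMat_apply (a b : Fin (N twoS)) :
    SpMat twoS a b = if (a : ℕ) + 1 = b then (√(ladderWeight twoS b) : ℂ) else 0 := by
  simp only [SpMat, Matrix.of_apply, ladderWeight, mval, spin]
  congr 4
  ring

lemma SmMat_eq_transpose : SmMat twoS = (SpMat twoS)ᵀ := by
  ext a b
  rw [Matrix.transpose_apply, SpMat_apply, SmMat, Matrix.of_apply]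
  split_ifs with h h'
  · simp only [ladderWeight, mval, spin, h]
    push_cast; ring_nf
  all_goals first | rfl | omega

lemma SpMat_mul_transpose :
    SpMat twoS * (SpMat twoS)ᵀ =
      Matrix.diagonal fun a : Fin (N twoS) => (ladderWeight twoS ((a : ℕ) + 1) : ℂ) := by
  ext a b
  rw [Matrix.mul_apply]
  simp only [Matrix.transpose_apply, SpMat_apply, ite_mul, zero_mul]
  rw [Fin.sum_univ_eq_sum_range (fun c => if (a : ℕ) + 1 = c then
      (√(ladderWeight twoS c) : ℂ) * (if (b : ℕ) + 1 = c then (√(ladderWeight twoS c) : ℂ) else 0)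
    else 0), Finset.sum_ite_eq]
  rcases eq_or_ne a b with rfl | hab
  · have ha : (a : ℕ) ≤ twoS := Nat.lt_succ_iff.mp a.isLt
    have hw := ladderWeight_nonneg (twoS := twoS) (k := a + 1) (by omega)
    simp only [Matrix.diagonal_apply_eq, if_true, Finset.mem_range, N]
    split_ifs with h
    · rw [← Complex.ofReal_mul, Real.mul_self_sqrt hw]
    · have : (a : ℕ) = twoS := by omega
      simp [ladderWeight, this]
  · have : (b : ℕ) ≠ a := fun h => hab (Fin.ext h.symm)
    simp [this, Matrix.diagonal_apply_ne _ hab]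

lemma transpose_mul_SpMat :
    (SpMat twoS)ᵀ * SpMat twoS =
      Matrix.diagonal fun a : Fin (N twoS) => (ladderWeight twoS a : ℂ) := by
  ext a b
  rw [Matrix.mul_apply]
  simp only [Matrix.transpose_apply, SpMat_apply, ite_mul, zero_mul]
  rw [Fin.sum_univ_eq_sum_range (fun c => if c + 1 = (a : ℕ) then
      (√(ladderWeight twoS a) : ℂ) * (if c + 1 = (b : ℕ) then (√(ladderWeight twoS b) : ℂ) else 0)
    else 0)]
  rcases Nat.eq_zero_or_pos (a : ℕ) with ha | ha
  · have hw : ladderWeight twoS 0 = 0 := by simp [ladderWeight]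
    rcases eq_or_ne a b with rfl | hab
    · simp [ha, hw]
    · simp [ha, Matrix.diagonal_apply_ne _ hab]
  · obtain ⟨k, hk⟩ := Nat.exists_eq_add_one.mpr ha
    have hk' : k < twoS + 1 := by have := a.isLt; simp only [N] at this; omega
    simp only [hk, Nat.add_right_cancel_iff, Finset.sum_ite_eq', Finset.mem_range, hk', if_true]
    rcases eq_or_ne a b with rfl | hab
    · have hw := ladderWeight_nonneg (twoS := twoS) (k := a) (by omega)
      rw [hk] at hw
      simp only [hk, if_true, Matrix.diagonal_apply_eq]
      rw [← Complex.ofReal_mul, Real.mul_self_sqrt hw]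
    · have : k + 1 ≠ b := fun h => hab (Fin.ext (hk.trans h))
      simp [this, Matrix.diagonal_apply_ne _ hab]

lemma SzMat_mul_SpMat_sub : SzMat twoS * SpMat twoS - SpMat twoS * SzMat twoS = SpMat twoS := by
  ext a b
  rw [Matrix.sub_apply, SzMat, Matrix.diagonal_mul, Matrix.mul_diagonal, SpMat_apply]
  split_ifs with h
  · simp only [mval, ← h]; push_cast; ring
  · simp

lemma SzMat_mul_SmMat_sub : SzMat twoS * SmMat twoS - SmMat twoS * SzMat twoS = -SmMat twoS := by
  have hSz : (SzMat twoS)ᵀ = SzMat twoS := Matrix.diagonal_transpose _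
  rw [SmMat_eq_transpose]
  conv_rhs => rw [← SzMat_mul_SpMat_sub]
  rw [Matrix.transpose_sub, Matrix.transpose_mul, Matrix.transpose_mul, hSz, neg_sub]

lemma SpMat_mul_SmMat_sub :
    SpMat twoS * SmMat twoS - SmMat twoS * SpMat twoS = (2 : ℂ) • SzMat twoS := by
  rw [SmMat_eq_transpose, SpMat_mul_transpose, transpose_mul_SpMat, Matrix.diagonal_sub, SzMat,
    ← Matrix.diagonal_smul]
  congr 1
  ext a
  simp only [Pi.smul_apply, smul_eq_mul, ladderWeight, mval, spin]
  push_cast; ring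

lemma inv_two_mul_I : ((2 : ℂ) * Complex.I)⁻¹ = -(2⁻¹ * Complex.I) := by
  rw [mul_inv, Complex.inv_I, mul_neg]

lemma SyMat_mul_SzMat_sub :
    SyMat twoS * SzMat twoS - SzMat twoS * SyMat twoS = Complex.I • SxMat twoS := by
  have hp := SzMat_mul_SpMat_sub (twoS := twoS)
  have hm := SzMat_mul_SmMat_sub (twoS := twoS)
  rw [SyMat, SxMat, inv_two_mul_I, smul_mul_assoc, mul_smul_comm, ← smul_sub, sub_mul, mul_sub]
  rw [sub_eq_iff_eq_add] at hp hm
  rw [hp, hm]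
  module

lemma SyMat_mul_SxMat_sub :
    SyMat twoS * SxMat twoS - SxMat twoS * SyMat twoS = -Complex.I • SzMat twoS := by
  have h : (SpMat twoS - SmMat twoS) * (SpMat twoS + SmMat twoS) -
      (SpMat twoS + SmMat twoS) * (SpMat twoS - SmMat twoS) = (4 : ℂ) • SzMat twoS := by
    rw [show (4 : ℂ) = 2 * 2 by norm_num, mul_smul, ← SpMat_mul_SmMat_sub, two_smul]
    noncomm_ring
  rw [SyMat, SxMat, smul_mul_smul_comm, smul_mul_smul_comm, mul_comm (2⁻¹ : ℂ), ← smul_sub,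
    h, inv_two_mul_I]
  module

lemma SyMat_mul_sub_ladder {s : ℂ} (hs : s ^ 2 = 1) :
    SyMat twoS * (SzMat twoS + (s * Complex.I) • SxMat twoS) -
        (SzMat twoS + (s * Complex.I) • SxMat twoS) * SyMat twoS =
      s • (SzMat twoS + (s * Complex.I) • SxMat twoS) := by
  rw [mul_add, add_mul, mul_smul_comm, smul_mul_assoc, add_sub_add_comm, ← smul_sub,
    SyMat_mul_SzMat_sub, SyMat_mul_SxMat_sub]
  linear_combination (norm := module)
    hs • (-Complex.I) • SxMat twoS + Complex.I_sq • (-s) • SzMat twoS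

end SpinAlgebra

section Site

variable {twoS L : ℕ}

lemma site_apply (j : Fin L) (A : Matrix (Fin (N twoS)) (Fin (N twoS)) ℂ) (x y : Conf twoS L) :
    site twoS L j A x y = if ∀ i, i ≠ j → x i = y i then A (x j) (y j) else 0 := rfl

lemma site_apply_eq_sum (j : Fin L) (A : Matrix (Fin (N twoS)) (Fin (N twoS)) ℂ)
    (x y : Conf twoS L) :
    site twoS L j A x y = ∑ c, if y = Function.update x j c then A (x j) c else 0 := by
  simp [site_apply, Function.eq_update_iff, ite_and, eq_comm]

lemma site_mul_apply (j : Fin L) (A : Matrix (Fin (N twoS)) (Fin (N twoS)) ℂ) (M : Op twoS L)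
    (x y : Conf twoS L) :
    (site twoS L j A * M) x y = ∑ c, A (x j) c * M (Function.update x j c) y := by
  simp only [Matrix.mul_apply, site_apply_eq_sum, Finset.sum_mul, ite_mul, zero_mul]
  rw [Finset.sum_comm]
  simp

lemma site_diagonal (j : Fin L) (d : Fin (N twoS) → ℂ) :
    site twoS L j (Matrix.diagonal d) = Matrix.diagonal fun x : Conf twoS L => d (x j) := by
  ext x y
  rcases eq_or_ne x y with rfl | hxy
  · simp [site_apply]
  · rw [Matrix.diagonal_apply_ne _ hxy, site_apply]
    split_ifs with h
    · refine Matrix.diagonal_apply_ne _ fun hj => hxy (funext fun i => ?_)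
      by_cases hi : i = j
      · rwa [hi]
      · exact h i hi
    · rfl

lemma site_one (j : Fin L) : site twoS L j 1 = 1 := by
  rw [← Matrix.diagonal_one, site_diagonal, Matrix.diagonal_one]

lemma site_add (j : Fin L) (A B : Matrix (Fin (N twoS)) (Fin (N twoS)) ℂ) :
    site twoS L j (A + B) = site twoS L j A + site twoS L j B := by
  ext x y
  simp only [site_apply, Matrix.add_apply]
  split_ifs <;> simp

lemma site_sub (j : Fin L) (A B : Matrix (Fin (N twoS)) (Fin (N twoS)) ℂ) :
    site twoS L j (A - B) = site twoS L j A - site twoS L j B := by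
  ext x y
  simp only [site_apply, Matrix.sub_apply]
  split_ifs <;> simp

lemma site_smul (j : Fin L) (c : ℂ) (A : Matrix (Fin (N twoS)) (Fin (N twoS)) ℂ) :
    site twoS L j (c • A) = c • site twoS L j A := by
  ext x y
  simp only [site_apply, Matrix.smul_apply]
  split_ifs <;> simp

lemma site_mul_site (j : Fin L) (A B : Matrix (Fin (N twoS)) (Fin (N twoS)) ℂ) :
    site twoS L j A * site twoS L j B = site twoS L j (A * B) := by
  ext x y
  have hupd : ∀ c, (∀ i, i ≠ j → Function.update x j c i = y i) ↔
      ∀ i, i ≠ j → x i = y i := fun c => forall₂_congr fun i hi => by rw [Function.update_of_ne hi]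
  rw [site_mul_apply, site_apply, Matrix.mul_apply]
  simp only [site_apply, Function.update_self, hupd]
  split_ifs <;> simp

lemma site_mul_site_apply_of_ne {j j' : Fin L} (h : j ≠ j')
    (A B : Matrix (Fin (N twoS)) (Fin (N twoS)) ℂ) (x y : Conf twoS L) :
    (site twoS L j A * site twoS L j' B) x y =
      if ∀ i, i ≠ j → i ≠ j' → x i = y i then A (x j) (y j) * B (x j') (y j') else 0 := by
  have hupd : ∀ c, (∀ i, i ≠ j' → Function.update x j c i = y i) ↔
      c = y j ∧ ∀ i, i ≠ j → i ≠ j' → x i = y i := by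
    intro c
    constructor
    · intro hc
      refine ⟨by simpa using hc j h, fun i hi hi' => ?_⟩
      simpa [Function.update_of_ne hi] using hc i hi'
    · rintro ⟨rfl, hc⟩ i hi'
      by_cases hi : i = j
      · rw [hi, Function.update_self]
      · rw [Function.update_of_ne hi]; exact hc i hi hi'
  simp only [site_mul_apply, site_apply, hupd, Function.update_of_ne h.symm, ite_and]
  simp

lemma site_commute {j j' : Fin L} (h : j ≠ j') (A B : Matrix (Fin (N twoS)) (Fin (N twoS)) ℂ) :
    Commute (site twoS L j A) (site twoS L j' B) := by
  ext x y
  rw [site_mul_site_apply_of_ne h, site_mul_site_apply_of_ne h.symm, mul_comm]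
  simp only [ne_eq, forall_comm (α := ¬_ = j)]

end Site

section SpinReversal

variable {twoS L : ℕ}

lemma SyT_mul_site_sub (j : Fin L) (B : Matrix (Fin (N twoS)) (Fin (N twoS)) ℂ) :
    SyT twoS L * site twoS L j B - site twoS L j B * SyT twoS L =
      site twoS L j (SyMat twoS * B - B * SyMat twoS) := by
  rw [SyT, Finset.sum_mul, Finset.mul_sum, ← Finset.sum_sub_distrib,
    Finset.sum_eq_single_of_mem j (Finset.mem_univ j), site_mul_site, site_mul_site, site_sub]
  intro j' _ hj'
  rw [(site_commute hj' _ _).eq, sub_self]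

lemma Uy_mul_site_of_commutator_eq (j : Fin L) {B : Matrix (Fin (N twoS)) (Fin (N twoS)) ℂ}
    {s : ℂ} (h : SyMat twoS * B - B * SyMat twoS = s • B) :
    Uy twoS L * site twoS L j B =
      Complex.exp (-Complex.I * Real.pi * s) • (site twoS L j B * Uy twoS L) := by
  refine Matrix.exp_smul_mul_of_commutator_eq ?_ _
  rw [SyT_mul_site_sub, h, site_smul]

lemma Uy_mul_site_SzMat (j : Fin L) :
    Uy twoS L * site twoS L j (SzMat twoS) = -(site twoS L j (SzMat twoS) * Uy twoS L) := by
  have hladder : ∀ s : ℂ, s = 1 ∨ s = -1 →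
      Uy twoS L * site twoS L j (SzMat twoS + (s * Complex.I) • SxMat twoS) =
        -(site twoS L j (SzMat twoS + (s * Complex.I) • SxMat twoS) * Uy twoS L) := by
    intro s hs
    have hs2 : s ^ 2 = 1 := by rcases hs with rfl | rfl <;> norm_num
    have hphase : Complex.exp (-Complex.I * Real.pi * s) = -1 := by
      rcases hs with rfl | rfl
      · rw [show -Complex.I * Real.pi * 1 = -(Real.pi * Complex.I) by ring,
          Complex.exp_neg_pi_mul_I]
      · rw [show -Complex.I * Real.pi * -1 = Real.pi * Complex.I by ring, Complex.exp_pi_mul_I]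
    rw [Uy_mul_site_of_commutator_eq j (SyMat_mul_sub_ladder hs2), hphase, neg_one_smul]
  have hSz : SzMat twoS = (2 : ℂ)⁻¹ • ((SzMat twoS + (1 * Complex.I) • SxMat twoS) +
      (SzMat twoS + (-1 * Complex.I) • SxMat twoS)) := by module
  rw [hSz, site_smul, site_add, mul_smul_comm, mul_add, hladder 1 (.inl rfl),
    hladder (-1) (.inr rfl), smul_mul_assoc, add_mul]
  module

end SpinReversal

section LinkTwist

open NormedSpace

variable {twoS L : ℕ}

def twistCoeff (L : ℕ) (ε : ℝ) : ℂ :=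
  -(ε : ℂ) * ((2 * Real.pi / L : ℝ) : ℂ) * Complex.I

lemma UtwL_eq_exp [NeZero L] (ε : ℝ) :
    UtwL twoS L ε = exp (twistCoeff L ε • twistGenL twoS L) := rfl

lemma twistCoeff_neg (L : ℕ) (ε : ℝ) : twistCoeff L (-ε) = -twistCoeff L ε := by
  simp only [twistCoeff, Complex.ofReal_neg, neg_neg, neg_mul]

lemma cexp_twistCoeff_mul_int [NeZero L] (m n : ℤ) :
    Complex.exp (twistCoeff L m * (L * n)) = 1 := by
  have hL : (L : ℂ) ≠ 0 := Nat.cast_ne_zero.mpr (NeZero.ne L)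
  rw [show twistCoeff L m * (L * n) = ((-(m * n) : ℤ) : ℂ) * (2 * Real.pi * Complex.I) by
    simp only [twistCoeff]; push_cast; field_simp]
  exact Complex.exp_int_mul_two_pi_mul_I _

def twistGenLDiag (twoS L : ℕ) [NeZero L] (x : Conf twoS L) : ℂ :=
  ∑ j ∈ Finset.Icc 1 L, ((j : ℂ) - 1 / 2) * ((mval twoS (x j) : ℂ) - (spin twoS : ℂ))

lemma twistGenL_eq_diagonal [NeZero L] :
    twistGenL twoS L = Matrix.diagonal (twistGenLDiag twoS L) := by
  have hsite : ∀ j : Fin L, site twoS L j (SzMat twoS - ((spin twoS : ℝ) : ℂ) • 1) =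
      Matrix.diagonal fun x => (mval twoS (x j) : ℂ) - spin twoS := by
    intro j
    rw [SzMat, Matrix.smul_one_eq_diagonal, Matrix.diagonal_sub, site_diagonal]
  simp only [twistGenL, hsite, ← Matrix.diagonal_smul]
  refine (map_sum (Matrix.diagonalAddMonoidHom (Conf twoS L) ℂ) _ _).symm.trans
    (congrArg Matrix.diagonal (funext fun x => ?_))
  simp [twistGenLDiag, Finset.sum_apply]

lemma UtwL_eq_diagonal [NeZero L] (ε : ℝ) :
    UtwL twoS L ε =
      Matrix.diagonal fun x => Complex.exp (twistCoeff L ε * twistGenLDiag twoS L x) := by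
  rw [UtwL_eq_exp, twistGenL_eq_diagonal, ← Matrix.diagonal_smul, Matrix.exp_diagonal]
  congr 1
  funext x
  rw [Pi.exp_def, ← Complex.exp_eq_exp_ℂ]
  rfl

lemma Uy_mul_site_SzMat_sub_spin (j : Fin L) :
    Uy twoS L * site twoS L j (SzMat twoS - (spin twoS : ℂ) • 1) =
      (-site twoS L j (SzMat twoS - (spin twoS : ℂ) • 1) - (2 * spin twoS : ℂ) • 1) *
        Uy twoS L := by
  rw [site_sub, site_smul, site_one, mul_sub, Uy_mul_site_SzMat, mul_smul_comm, mul_one]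
  simp only [sub_mul, smul_mul_assoc, one_mul, neg_sub]
  module

lemma Uy_mul_twistGenL [NeZero L] :
    Uy twoS L * twistGenL twoS L =
      (-twistGenL twoS L - (spin twoS * L ^ 2 : ℂ) • 1) * Uy twoS L := by
  have hconst : (spin twoS * L ^ 2 : ℂ) =
      ∑ j ∈ Finset.Icc 1 L, ((j : ℂ) - 1 / 2) * (2 * spin twoS) := by
    rw [← Finset.sum_mul, Finset.sum_Icc_sub_half]; ring
  rw [twistGenL, Finset.mul_sum, hconst, Finset.sum_smul, ← Finset.sum_neg_distrib,
    ← Finset.sum_sub_distrib, Finset.sum_mul]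
  refine Finset.sum_congr rfl fun j _ => ?_
  rw [mul_smul_comm, Uy_mul_site_SzMat_sub_spin, ← smul_mul_assoc]
  congr 1
  module

lemma Uy_mul_UtwL [NeZero L] (hL : Even L) (m : ℤ) :
    Uy twoS L * UtwL twoS L m = UtwL twoS L (-m) * Uy twoS L := by
  set c := twistCoeff L m with hc
  have hsemi : SemiconjBy (Uy twoS L) (c • twistGenL twoS L)
      (c • (-twistGenL twoS L - (spin twoS * L ^ 2 : ℂ) • 1)) := by
    rw [SemiconjBy, mul_smul_comm, Uy_mul_twistGenL, smul_mul_assoc]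
  have hsplit : c • (-twistGenL twoS L - (spin twoS * L ^ 2 : ℂ) • 1) =
      (-c) • twistGenL twoS L + (-(c * (spin twoS * L ^ 2))) • 1 := by module
  obtain ⟨K, hK⟩ := hL
  have hphase : Complex.exp (-(c * (spin twoS * L ^ 2))) = 1 := by
    have hSL : (spin twoS * L : ℂ) = ((twoS * K : ℤ) : ℂ) := by
      rw [spin, hK]; push_cast; ring
    have h := cexp_twistCoeff_mul_int (L := L) (-m) (twoS * K)
    rw [Int.cast_neg, twistCoeff_neg, ← hSL] at h
    rw [← h, hc]
    congr 1
    ring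
  rw [UtwL_eq_exp, (Matrix.semiconjBy_exp hsemi).eq, hsplit, Matrix.exp_add_smul_one, hphase,
    one_smul, UtwL_eq_exp, twistCoeff_neg]

end LinkTwist

section LinkParity

variable {twoS L : ℕ}

lemma Plink_eq [NeZero L] :
    Plink twoS L = Matrix.of fun x y => if x = (fun i => y (1 - i)) then 1 else 0 := by
  simp only [Plink, Pop, Utrl, Matrix.of_ite_eq_mul_of_ite_eq, neg_add_eq_sub]

lemma twistGenLDiag_reflect [NeZero L] (y : Conf twoS L) :
    twistGenLDiag twoS L (fun i => y (1 - i)) + twistGenLDiag twoS L y =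
      L * ((-∑ j ∈ Finset.Icc 1 L, (y j : ℕ) : ℤ) : ℂ) := by
  rw [twistGenLDiag, twistGenLDiag,
    Finset.sum_Icc_sub_half_mul_reflect fun i => (mval twoS (y i) : ℂ) - spin twoS]
  push_cast
  simp [mval]

lemma Plink_mul_UtwL_neg [NeZero L] (m : ℤ) :
    Plink twoS L * UtwL twoS L (-m) = UtwL twoS L m * Plink twoS L := by
  rw [Plink_eq, UtwL_eq_diagonal, UtwL_eq_diagonal]
  refine Matrix.of_ite_eq_mul_diagonal _ fun y => ?_
  rw [eq_sub_of_add_eq (twistGenLDiag_reflect y), twistCoeff_neg, mul_sub, sub_eq_neg_add,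
    Complex.exp_add, cexp_twistCoeff_mul_int, mul_one, neg_mul]

lemma Plink_mul_Uy_commute_UtwL [NeZero L] (hL : Even L) (m : ℤ) :
    Commute (Plink twoS L * Uy twoS L) (UtwL twoS L m) := by
  rw [Commute, SemiconjBy, mul_assoc, Uy_mul_UtwL hL, ← mul_assoc, Plink_mul_UtwL_neg, mul_assoc]

end LinkParity

theorem combined_link_parity_spin_reversal_twist_general (twoS L : ℕ) [NeZero L]
    (hLeven : Even L) :
    (Plink twoS L * Uy twoS L) * UtwL twoS L 1 =
        UtwL twoS L 1 * (Plink twoS L * Uy twoS L) ∧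
    (Plink twoS L * Uy twoS L) * UtwL twoS L (-1) =
        UtwL twoS L (-1) * (Plink twoS L * Uy twoS L) := by
  constructor
  · simpa using (Plink_mul_Uy_commute_UtwL (twoS := twoS) hLeven 1).eq
  · simpa using (Plink_mul_Uy_commute_UtwL (twoS := twoS) hLeven (-1)).eq

/-- Theorem 9: `P_link U^y_π` commutes with the link-centered twist
operators. -/
theorem combined_link_parity_spin_reversal_twist (twoS L : ℕ) [NeZero L]
    (hS : 0 < twoS) (hL4 : 4 ≤ L) (hLeven : Even L) :
    (Plink twoS L * Uy twoS L) * UtwL twoS L 1 =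
        UtwL twoS L 1 * (Plink twoS L * Uy twoS L) ∧
    (Plink twoS L * Uy twoS L) * UtwL twoS L (-1) =
        UtwL twoS L (-1) * (Plink twoS L * Uy twoS L) :=
  combined_link_parity_spin_reversal_twist_general twoS L hLeven

end LSM
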